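/- Let (R, m) be a local Artinian ring with socle s = (0 : m) of dimension s over R/m. Let g ∈ R[t] have degree n and set I = (0 :_R c(g)). Suppose J is an ideal with I ⊆ J ⊆ (I : m) and dim_{R/m}(J/I) = r > s, and m is a natural number with (m+1)r > (n+m+1)s. Then there exists a polynomial f ∈ R[t] of degree at most m with c(f) ⊆ J, fg = 0, and c(f)·c(g) ≠ 0. -/

import Mathlib

/-!
Each `x i` lies in `(I : m)`, so `x i * g_l` kills `m` and lies in the socle, which is spanned by
`s` elements. For `f = ∑_k (∑_i c_{k,i} x_i) t^k` of degree `≤ m`, the `n + m + 1` coefficients of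
`f g` are therefore socle elements whose coordinates depend `R/m`-linearly on the `(m + 1) r`
unknowns `c_{k,i}` modulo `m`. As `(m + 1) r > (n + m + 1) s`, some choice with a `c_{k,i}` outside
`m` makes all these coordinates vanish mod `m`, hence `f g = 0`. That coefficient of `f` is then
not in `I` by independence of the `x_i` modulo `I`, i.e. `c(f) c(g) ≠ 0`.
-/

open Polynomial

/-- The content ideal of a polynomial: the ideal generated by its coefficients. -/
noncomputable def cont {R : Type*} [CommRing R] (p : R[X]) : Ideal R :=
  Ideal.span (Set.range p.coeff)

/-- The minimal number of generators of an ideal. -/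
noncomputable def mug {R : Type*} [CommRing R] (I : Ideal R) : ℕ :=
  sInf {n | ∃ x : Fin n → R, Ideal.span (Set.range x) = I}

/-- The Dedekind--Mertens number of a polynomial. -/
noncomputable def dmNumber (R : Type*) [CommRing R] (g : R[X]) : ℕ :=
  sInf {k | 0 < k ∧ ∀ f : R[X], cont (f * g) * cont f ^ (k - 1) = cont f ^ k * cont g}

/-- The polarized Dedekind--Mertens number of a polynomial. -/
noncomputable def polDmNumber (R : Type*) [CommRing R] (g : R[X]) : ℕ :=
  sInf {k | 0 < k ∧ ∀ f : Fin k → R[X],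
    (∑ i, cont (f i * g) * ∏ j ∈ Finset.univ.erase i, cont (f j)) =
      (∏ i, cont (f i)) * cont g}

/-- `x` is in the integral closure of the ideal `I`. -/
def memIntCl {R : Type*} [CommRing R] (I : Ideal R) (x : R) : Prop :=
  ∃ k : ℕ, 0 < k ∧ ∃ a : ℕ → R, (∀ i, 1 ≤ i → i ≤ k → a i ∈ I ^ i) ∧
    x ^ k + ∑ i ∈ Finset.Icc 1 k, a i * x ^ (k - i) = 0

open IsLocalRing Matrix

theorem IsLocalRing.exists_mulVec_mem_maximalIdeal_of_card_lt {R κ ι : Type*} [CommRing R]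
    [IsLocalRing R] [Fintype κ] [Fintype ι] (A : Matrix κ ι R)
    (h : Fintype.card κ < Fintype.card ι) :
    ∃ c : ι → R, (∃ i, c i ∉ maximalIdeal R) ∧ ∀ k, (A *ᵥ c) k ∈ maximalIdeal R := by
  obtain ⟨v, hv, hv0⟩ : ∃ v ∈ LinearMap.ker (A.map (residue R)).mulVecLin, v ≠ 0 :=
    Submodule.exists_mem_ne_zero_of_ne_bot (LinearMap.ker_ne_bot_of_finrank_lt (by simpa))
  choose c hc using fun i => residue_surjective (v i)
  obtain ⟨i, hi⟩ := Function.ne_iff.mp hv0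
  refine ⟨c, ⟨i, fun hci => hi ?_⟩, fun k => ?_⟩
  · rw [← hc, (residue_eq_zero_iff _).mpr hci, Pi.zero_apply]
  · rw [← residue_eq_zero_iff, RingHom.map_mulVec, show residue R ∘ c = v from funext hc]
    exact congrFun hv k

section Colon

variable {R : Type*} [CommRing R]

theorem Ideal.mul_mem_colon_bot_of_mem_colon {N : Ideal R} {S : Set R} {x z : R}
    (hx : x ∈ ((⊥ : Ideal R).colon (N : Set R)).colon S) (hz : z ∈ N) :
    x * z ∈ (⊥ : Ideal R).colon S := by
  refine Submodule.mem_colon.mpr fun a ha => ?_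
  have := Submodule.mem_colon.mp (Submodule.mem_colon.mp hx a ha) z hz
  simp only [smul_eq_mul, Submodule.mem_bot] at this ⊢
  linear_combination this

theorem Ideal.sum_mul_eq_zero_of_mem_colon_bot {ι : Type*} [Fintype ι] {I : Ideal R} {y b : ι → R}
    (hy : ∀ j, y j ∈ (⊥ : Ideal R).colon (I : Set R)) (hb : ∀ j, b j ∈ I) :
    ∑ j, b j * y j = 0 :=
  Finset.sum_eq_zero fun j _ => by
    simpa [mul_comm] using Submodule.mem_colon.mp (hy j) (b j) (hb j)

theorem Ideal.le_colon_bot_of_mul_eq_bot {I N : Ideal R} (h : I * N = ⊥) :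
    I ≤ (⊥ : Ideal R).colon (N : Set R) := fun _ ha =>
  Submodule.mem_colon.mpr fun _ hz => h ▸ Ideal.mul_mem_mul ha hz

end Colon

namespace Polynomial

variable {R : Type*} [CommRing R]

theorem coeff_mem_cont (p : R[X]) (l : ℕ) : p.coeff l ∈ cont p :=
  Ideal.subset_span ⟨l, rfl⟩

variable [DecidableEq R]

theorem cont_ofFn (N : ℕ) (a : Fin N → R) : cont (ofFn N a) = Ideal.span (Set.range a) := by
  refine le_antisymm (Ideal.span_le.mpr ?_) (Ideal.span_le.mpr ?_)
  · rintro _ ⟨l, rfl⟩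
    rcases lt_or_ge l N with hl | hl
    · rw [ofFn_coeff_eq_val_of_lt a hl]
      exact Ideal.subset_span ⟨_, rfl⟩
    · rw [ofFn_coeff_eq_zero_of_ge a hl]
      exact zero_mem _
  · rintro _ ⟨k, rfl⟩
    rw [← ofFn_coeff_eq_val_of_lt a k.isLt]
    exact coeff_mem_cont _ _

theorem natDegree_ofFn_le (N : ℕ) (a : Fin (N + 1) → R) : (ofFn (N + 1) a).natDegree ≤ N :=
  Nat.le_of_lt_succ (ofFn_natDegree_lt N.succ_pos a)

theorem coeff_ofFn_mul (N : ℕ) (a : Fin N → R) (g : R[X]) (p : ℕ) :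
    (ofFn N a * g).coeff p = ∑ k : Fin N, if (k : ℕ) ≤ p then a k * g.coeff (p - k) else 0 := by
  simp only [ofFn_eq_sum_monomial, Finset.sum_mul, finsetSum_coeff, ← C_mul_X_pow_eq_monomial,
    mul_assoc, coeff_C_mul, coeff_X_pow_mul']
  refine Finset.sum_congr rfl fun k _ => ?_
  split_ifs <;> simp

end Polynomial

theorem exists_ofFn_mul_eq_zero {R ι κ : Type*} [CommRing R] [IsLocalRing R] [DecidableEq R]
    [Fintype ι] [Fintype κ] (x : ι → R) (g : R[X]) {n : ℕ} (hg : g.natDegree ≤ n) (y : κ → R)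
    (hy : ∀ j, y j ∈ (⊥ : Ideal R).colon (maximalIdeal R : Set R))
    (hxg : ∀ i l, x i * g.coeff l ∈ Ideal.span (Set.range y)) (m : ℕ)
    (hcard : (n + m + 1) * Fintype.card κ < (m + 1) * Fintype.card ι) :
    ∃ c : Fin (m + 1) → ι → R, (∃ k i, c k i ∉ maximalIdeal R) ∧
      ofFn (m + 1) (fun k => ∑ i, c k i * x i) * g = 0 := by
  choose b hb using fun i l => (Submodule.mem_span_range_iff_exists_fun R).mp (hxg i l)
  -- `A (p, j) (k, i)` is the `j`-th socle coordinate of `x i * g_{p-k}`, the contribution of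
  -- `c (k, i)` to the coefficient of `t^p` in `f g`.
  let A : Matrix (Fin (n + m + 1) × κ) (Fin (m + 1) × ι) R := fun pj ki =>
    if (ki.1 : ℕ) ≤ pj.1 then b ki.2 (pj.1 - ki.1) pj.2 else 0
  have hA (p : Fin (n + m + 1)) (k : Fin (m + 1)) (i : ι) :
      ∑ j, A (p, j) (k, i) * y j = if (k : ℕ) ≤ p then x i * g.coeff (p - k) else 0 := by
    simp only [A, ← hb, smul_eq_mul]
    split_ifs <;> simp
  obtain ⟨c, ⟨⟨k, i⟩, hki⟩, hAc⟩ := exists_mulVec_mem_maximalIdeal_of_card_lt A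
    (by simpa only [Fintype.card_prod, Fintype.card_fin] using hcard)
  refine ⟨fun k i => c (k, i), ⟨k, i, hki⟩, ?_⟩
  beta_reduce
  ext p
  rw [coeff_zero]
  rcases lt_or_ge p (n + m + 1) with hp | hp
  · calc _ = ∑ j, (A *ᵥ c) (⟨p, hp⟩, j) * y j := by
          simp only [coeff_ofFn_mul, mulVec, dotProduct, Fintype.sum_prod_type, Finset.sum_mul]
          rw [Finset.sum_comm]
          refine Finset.sum_congr rfl fun k _ => ?_
          rw [Finset.sum_comm]
          simp only [mul_right_comm _ (c _) (y _), ← Finset.sum_mul, hA ⟨p, hp⟩]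
          split_ifs
          · simp only [Finset.sum_mul]
            exact Finset.sum_congr rfl fun i _ => by ring
          · simp
      _ = 0 := Ideal.sum_mul_eq_zero_of_mem_colon_bot hy fun j => hAc _
  · refine coeff_eq_zero_of_natDegree_lt ((natDegree_mul_le).trans_lt ?_)
    have := natDegree_ofFn_le m (fun k => ∑ i, c (k, i) * x i)
    omega

theorem exists_annihilating_polynomial_general {R : Type*} [CommRing R]
    [IsLocalRing R] (s : ℕ)
    (hsoc : ∃ y : Fin s → R,
      Ideal.span (Set.range y) = Submodule.colon ⊥ (IsLocalRing.maximalIdeal R : Set R) ∧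
      ∀ c : Fin s → R, (∑ i, c i * y i) = 0 → ∀ i, c i ∈ IsLocalRing.maximalIdeal R)
    (g : R[X]) (n : ℕ) (hn : g.natDegree = n)
    (J : Ideal R)
    (hJI : J ≤ Submodule.colon (Submodule.colon ⊥ (cont g : Set R)) (IsLocalRing.maximalIdeal R : Set R))
    (r : ℕ)
    (hdim : ∃ x : Fin r → R, (∀ i, x i ∈ J) ∧
      J ≤ Submodule.colon ⊥ (cont g : Set R) ⊔ Ideal.span (Set.range x) ∧
      ∀ c : Fin r → R, (∑ i, c i * x i) ∈ Submodule.colon ⊥ (cont g : Set R) →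
        ∀ i, c i ∈ IsLocalRing.maximalIdeal R)
    (m : ℕ) (hm : (m + 1) * r > (n + m + 1) * s) :
    ∃ f : R[X], f.natDegree ≤ m ∧ cont f ≤ J ∧ f * g = 0 ∧ cont f * cont g ≠ ⊥ := by
  classical
  obtain ⟨y, hy_span, -⟩ := hsoc
  obtain ⟨x, hxJ, -, hx_ind⟩ := hdim
  have hy (j : Fin s) : y j ∈ (⊥ : Ideal R).colon (maximalIdeal R : Set R) :=
    hy_span ▸ Ideal.subset_span ⟨j, rfl⟩
  have hxg (i : Fin r) (l : ℕ) : x i * g.coeff l ∈ Ideal.span (Set.range y) :=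
    hy_span ▸ Ideal.mul_mem_colon_bot_of_mem_colon (hJI (hxJ i)) (coeff_mem_cont g l)
  obtain ⟨c, ⟨k, i, hki⟩, hfg⟩ := exists_ofFn_mul_eq_zero x g hn.le y hy hxg m
    (by simpa only [Fintype.card_fin] using hm)
  refine ⟨_, natDegree_ofFn_le m _, ?_, hfg, fun hbot => hki (hx_ind _ ?_ i)⟩
  · rw [cont_ofFn, Ideal.span_le]
    rintro _ ⟨k, rfl⟩
    exact Ideal.sum_mem _ fun i _ => J.mul_mem_left _ (hxJ i)
  · refine Ideal.le_colon_bot_of_mul_eq_bot hbot ?_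
    rw [cont_ofFn]
    exact Ideal.subset_span ⟨k, rfl⟩

/-- Theorem 3.1: Let `(R,m)` be a local Artinian ring whose socle `(0 : m)` has dimension
`s` over `R/m`.  Let `g` have degree `n`, let `I = (0 : c(g))`, and let `J` be an ideal with
`I ⊆ J ⊆ (I : m)` such that `J/I` has dimension `r > s` over `R/m`.  If `(m+1)r > (n+m+1)s`,
then there is a polynomial `f` of degree at most `m` with `c(f) ⊆ J`, `fg = 0` and
`c(f)c(g) ≠ 0`.  (Vector-space dimensions over `R/m` are encoded by explicit bases:
a spanning family whose linear relations have coefficients in `m`.) -/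
theorem exists_annihilating_polynomial {R : Type*} [CommRing R] [IsArtinianRing R]
    [IsLocalRing R] (s : ℕ)
    (hsoc : ∃ y : Fin s → R,
      Ideal.span (Set.range y) = Submodule.colon ⊥ (IsLocalRing.maximalIdeal R : Set R) ∧
      ∀ c : Fin s → R, (∑ i, c i * y i) = 0 → ∀ i, c i ∈ IsLocalRing.maximalIdeal R)
    (g : R[X]) (n : ℕ) (hn : g.natDegree = n)
    (J : Ideal R) (hIJ : Submodule.colon ⊥ (cont g : Set R) ≤ J)
    (hJI : J ≤ Submodule.colon (Submodule.colon ⊥ (cont g : Set R)) (IsLocalRing.maximalIdeal R : Set R))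
    (r : ℕ) (hrs : r > s)
    (hdim : ∃ x : Fin r → R, (∀ i, x i ∈ J) ∧
      J ≤ Submodule.colon ⊥ (cont g : Set R) ⊔ Ideal.span (Set.range x) ∧
      ∀ c : Fin r → R, (∑ i, c i * x i) ∈ Submodule.colon ⊥ (cont g : Set R) →
        ∀ i, c i ∈ IsLocalRing.maximalIdeal R)
    (m : ℕ) (hm : (m + 1) * r > (n + m + 1) * s) :
    ∃ f : R[X], f.natDegree ≤ m ∧ cont f ≤ J ∧ f * g = 0 ∧ cont f * cont g ≠ ⊥ :=
  exists_annihilating_polynomial_general s hsoc g n hn J hJI r hdim m hm
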